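/- Every directed functional extension *X of X, endowed with the Star-topology, has X as a dense subset: any Star-closed set containing X equals *X. (It suffices to show: if X ⊆ E(f₁,…,fₙ; η₁,…,ηₙ) := { ξ ∈ *X : ∃ i, *fᵢ(ξ)=ηᵢ }, then E(f₁,…,fₙ;η₁,…,ηₙ) = *X.) -/

import Mathlib

open Classical in
/-- A functional extension of a set `X` (with distinguished elements `0, 1`):
a superset `S ⊇ X` (given by the injection `inc`) together with a distinguished
extension `star f : S → S` of each `f : X → X`, satisfying `(comp)` and `(diag)`. -/
structure FunExt (X : Type*) (S : Type*) where
  inc : X → S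
  inc_inj : Function.Injective inc
  zero : X
  one : X
  one_ne_zero : one ≠ zero
  star : (X → X) → S → S
  star_extends : ∀ (f : X → X) (x : X), star f (inc x) = inc (f x)
  comp : ∀ (f g : X → X) (ξ : S), star g (star f ξ) = star (g ∘ f) ξ
  diag : ∀ (f g : X → X) (ξ : S),
    star (fun x => if f x = g x then one else zero) ξ =
      if star f ξ = star g ξ then inc one else inc zero

namespace FunExt

variable {X S : Type*}

open Classical in
/-- The characteristic function `χ_A : X → X` of a subset `A ⊆ X`. -/
noncomputable def chi (E : FunExt X S) (A : Set X) : X → X :=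
  fun x => if x ∈ A then E.one else E.zero

/-- The extension `*A ⊆ S` of a subset `A ⊆ X`, defined via `*χ_A`. -/
def starSet (E : FunExt X S) (A : Set X) : Set S :=
  { ξ | E.star (E.chi A) ξ = E.inc E.one }

/-- A functional extension is irredundant if every point is in the range of some `*f`. -/
def Irredundant (E : FunExt X S) : Prop :=
  ∀ ξ : S, ∃ (f : X → X) (η : S), E.star f η = ξ

/-- A functional extension is directed `(dir)`. -/
def Directed (E : FunExt X S) : Prop :=
  ∀ ξ η : S, ∃ (f g : X → X) (ζ : S), E.star f ζ = ξ ∧ E.star g ζ = η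

end FunExt

/-!
Write `*A` for `E.starSet A`. By `(diag)`, `*{x | f x = g x} = {ξ | *f ξ = *g ξ}`; this already
gives `*∅ = ∅`, `*Aᶜ = S \ *A`, and `*{x | f x = c} = {ξ | *f ξ = c}` for a standard value `c`.
Using `(dir)`, `*id = id`, and then `*A ∩ *B ⊆ *(A ∩ B)`: for `b ∈ B \ A`, the map `u` that fixes
`B` and sends `Bᶜ` to `b` fixes every `ξ ∈ *B`, and `χ_{A ∩ B} = χ_A ∘ u`. So `A ↦ *A` preserves
finite unions, and `ξ ∈ S = *(⋃ᵢ {x | fᵢ x = ηᵢ})` lies in some `*{x | fᵢ x = ηᵢ}`, where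
`ηᵢ` must be standard.
-/

namespace FunExt

variable {X S : Type*} (E : FunExt X S)

theorem inc_one_ne_inc_zero : E.inc E.one ≠ E.inc E.zero :=
  E.inc_inj.ne E.one_ne_zero

open Classical in
theorem star_chi_setOf_eq (f g : X → X) (ξ : S) :
    E.star (E.chi {x | f x = g x}) ξ =
      if E.star f ξ = E.star g ξ then E.inc E.one else E.inc E.zero :=
  E.diag f g ξ

theorem mem_starSet_setOf_eq {f g : X → X} {ξ : S} :
    ξ ∈ E.starSet {x | f x = g x} ↔ E.star f ξ = E.star g ξ := by
  change E.star (E.chi _) ξ = _ ↔ _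
  rw [star_chi_setOf_eq]
  by_cases h : E.star f ξ = E.star g ξ <;> simp [h, (inc_one_ne_inc_zero E).symm]

theorem star_const (c : X) (ξ : S) : E.star (fun _ => c) ξ = E.inc c := by
  have h_one : E.star (fun _ => E.one) ξ = E.inc E.one := by simpa using E.diag id id ξ
  calc E.star (fun _ => c) ξ = E.star ((fun _ => c) ∘ fun _ => E.one) ξ := rfl
    _ = E.inc c := by rw [← E.comp, h_one, E.star_extends]

theorem notMem_starSet_empty (ξ : S) : ξ ∉ E.starSet ∅ := by
  have h : E.chi ∅ = fun _ => E.zero := by funext x; simp [chi]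
  change E.star (E.chi ∅) ξ ≠ E.inc E.one
  rw [h, star_const]
  exact (inc_one_ne_inc_zero E).symm

theorem mem_starSet_univ (ξ : S) : ξ ∈ E.starSet Set.univ := by
  simpa using (E.mem_starSet_setOf_eq (f := id) (g := id) (ξ := ξ)).mpr rfl

theorem star_chi_eq_inc_one_or_inc_zero (A : Set X) (ξ : S) :
    E.star (E.chi A) ξ = E.inc E.one ∨ E.star (E.chi A) ξ = E.inc E.zero := by
  have hA : A = {x | E.chi A x = (fun _ => E.one) x} := by
    ext x; by_cases hx : x ∈ A <;> simp [chi, hx, E.one_ne_zero.symm]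
  rw [hA, star_chi_setOf_eq]
  split_ifs <;> simp

theorem mem_starSet_compl {A : Set X} {ξ : S} : ξ ∈ E.starSet Aᶜ ↔ ξ ∉ E.starSet A := by
  have hAc : Aᶜ = {x | E.chi A x = (fun _ => E.zero) x} := by
    ext x; by_cases hx : x ∈ A <;> simp [chi, hx, E.one_ne_zero]
  rw [hAc, mem_starSet_setOf_eq, star_const]
  change _ ↔ ¬E.star (E.chi A) ξ = E.inc E.one
  rcases E.star_chi_eq_inc_one_or_inc_zero A ξ with h | h <;>
    simp [h, inc_one_ne_inc_zero, (inc_one_ne_inc_zero E).symm]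

theorem star_eq_of_mem_starSet {f : X → X} {η : S} {ξ : S}
    (hξ : ξ ∈ E.starSet {x | E.inc (f x) = η}) : E.star f ξ = η := by
  obtain ⟨x₀, rfl⟩ : ∃ x₀, E.inc (f x₀) = η := by
    by_contra! h
    simp only [h, Set.ofPred_false] at hξ
    exact E.notMem_starSet_empty ξ hξ
  have h_eq : {x | E.inc (f x) = E.inc (f x₀)} = {x | f x = (fun _ => f x₀) x} := by
    simp only [E.inc_inj.eq_iff]
  rw [h_eq, mem_starSet_setOf_eq, star_const] at hξ
  exact hξ

namespace Directed

variable {E}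

theorem star_id (hdir : E.Directed) (ξ : S) : E.star id ξ = ξ := by
  obtain ⟨g, -, ζ, rfl, -⟩ := hdir ξ ξ
  rw [E.comp, Function.id_comp]

open Classical in
theorem mem_starSet_inter (hdir : E.Directed) {A B : Set X} {ξ : S}
    (hA : ξ ∈ E.starSet A) (hB : ξ ∈ E.starSet B) : ξ ∈ E.starSet (A ∩ B) := by
  by_cases hBA : B ⊆ A
  · rwa [Set.inter_eq_right.mpr hBA]
  obtain ⟨b, hbB, hbA⟩ := Set.not_subset.mp hBA
  let u : X → X := fun x => if x ∈ B then x else b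
  have hB_fix : B = {x | u x = id x} := by
    ext x
    by_cases hx : x ∈ B
    · simp [u, hx]
    · simpa [u, hx] using ne_of_mem_of_not_mem hbB hx
  have hu : E.star u ξ = ξ := by
    rw [hB_fix, mem_starSet_setOf_eq, hdir.star_id] at hB
    exact hB
  have h_chi : E.chi (A ∩ B) = E.chi A ∘ u := by
    funext x; by_cases hx : x ∈ B <;> simp [chi, u, hx, hbA]
  change E.star (E.chi (A ∩ B)) ξ = _
  rw [h_chi, ← E.comp, hu]
  exact hA

theorem mem_starSet_biInter {ι : Type*} (hdir : E.Directed) (A : ι → Set X) (s : Finset ι)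
    {ξ : S} (h : ∀ i ∈ s, ξ ∈ E.starSet (A i)) : ξ ∈ E.starSet (⋂ i ∈ s, A i) := by
  classical
  induction s using Finset.induction_on with
  | empty => simpa using E.mem_starSet_univ ξ
  | insert i s _ ih =>
    rw [Finset.set_biInter_insert]
    exact hdir.mem_starSet_inter (h i (s.mem_insert_self i))
      (ih fun j hj => h j (Finset.mem_insert_of_mem hj))

theorem exists_mem_starSet_of_mem_biUnion {ι : Type*} (hdir : E.Directed) (A : ι → Set X)
    (s : Finset ι) {ξ : S} (h : ξ ∈ E.starSet (⋃ i ∈ s, A i)) :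
    ∃ i ∈ s, ξ ∈ E.starSet (A i) := by
  by_contra! h_none
  have h_compl : ξ ∈ E.starSet (⋂ i ∈ s, (A i)ᶜ) :=
    hdir.mem_starSet_biInter _ s fun i hi => E.mem_starSet_compl.mpr (h_none i hi)
  simp only [← Set.compl_iUnion, E.mem_starSet_compl] at h_compl
  exact h_compl h

end Directed

end FunExt

/-- `X` is dense in `*X` for the Star-topology: if the basic
Star-closed set `E(f₁,…,fₙ; η₁,…,ηₙ)` contains (the copy of) `X`,
then it is all of `*X`. -/
theorem stmt_18 {X S : Type*} (E : FunExt X S) (hdir : E.Directed)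
    (n : ℕ) (f : Fin n → (X → X)) (η : Fin n → S)
    (hX : ∀ x : X, ∃ i : Fin n, E.star (f i) (E.inc x) = η i) :
    ∀ ξ : S, ∃ i : Fin n, E.star (f i) ξ = η i := by
  intro ξ
  simp only [E.star_extends] at hX
  have h_cover : (⋃ i ∈ Finset.univ, {x | E.inc (f i x) = η i}) = Set.univ := by
    simpa [Set.eq_univ_iff_forall] using hX
  have hξ := E.mem_starSet_univ ξ
  rw [← h_cover] at hξ
  obtain ⟨i, -, hi⟩ := hdir.exists_mem_starSet_of_mem_biUnion _ _ hξ
  exact ⟨i, E.star_eq_of_mem_starSet hi⟩
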